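/- arXiv:1605.01809 — 5 statements merged into one kernel-verified Lean document; each statement's English description precedes it below -/
import Mathlib

section
/- For every value of the angular momentum H ≥ 0, the amended potential 𝓔 attains a global minimum on the admissible configuration set S; i.e., there exists a point of S at which 𝓔 is less than or equal to its value at every other point of S. -/
/-- The admissible configuration set: triples of mutual distances
`(d₁₂, d₂₃, d₃₁)` satisfying the contact constraints `d_ij ≥ r_i + r_j`
and the triangle inequalities. -/
def admissibleSet (r1 r2 r3 : ℝ) : Set (ℝ × ℝ × ℝ) :=
  {d : ℝ × ℝ × ℝ |
    r1 + r2 ≤ d.1 ∧ r2 + r3 ≤ d.2.1 ∧ r3 + r1 ≤ d.2.2 ∧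
    d.1 ≤ d.2.1 + d.2.2 ∧ d.2.1 ≤ d.2.2 + d.1 ∧ d.2.2 ≤ d.1 + d.2.1}

/-- The amended potential `𝓔 = H²/(2 I_H) + U` on configuration space. -/
noncomputable def amendedPotential (m1 m2 m3 IS H : ℝ) (d : ℝ × ℝ × ℝ) : ℝ :=
  H ^ 2 / (2 * (m1 * m2 * d.1 ^ 2 + m2 * m3 * d.2.1 ^ 2 + m3 * m1 * d.2.2 ^ 2 + IS))
    - (m1 * m2 / d.1 + m2 * m3 / d.2.1 + m3 * m1 / d.2.2)

/-- Key estimate: with one pair at contact distance `s` and the remaining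
distances equal to a sufficiently large `T`, the amended potential drops
strictly below `-(mS/s)`. -/
lemma key_good (mS mL s T IS H : ℝ) (hmS : 0 < mS) (hmL : 0 < mL) (hs : 0 < s)
    (hT : 0 < T) (hIS : 0 < IS) (hHT : H ^ 2 < 2 * mL ^ 2 * T) :
    H ^ 2 / (2 * (mS * s ^ 2 + mL * T ^ 2 + IS)) - (mS / s + mL / T) < -(mS / s) := by
  have h1 : H ^ 2 / (2 * (mS * s ^ 2 + mL * T ^ 2 + IS)) ≤ H ^ 2 / (2 * (mL * T ^ 2)) :=
    div_le_div_of_nonneg_left (by positivity) (by positivity) (by nlinarith)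
  have h2 : H ^ 2 / (2 * (mL * T ^ 2)) < mL / T := by
    rw [div_lt_div_iff₀ (by positivity) hT]; nlinarith
  linarith

/-- A sufficiently large `T` exists. -/
lemma exists_T (mL H t0 : ℝ) (hmL : 0 < mL) (ht0 : 0 < t0) :
    ∃ T, t0 ≤ T ∧ 0 < T ∧ H ^ 2 < 2 * mL ^ 2 * T := by
  refine ⟨max t0 (H ^ 2 / (2 * mL ^ 2) + 1), le_max_left _ _,
    lt_of_lt_of_le ht0 (le_max_left _ _), ?_⟩
  have h1 : H ^ 2 / (2 * mL ^ 2) + 1 ≤ max t0 (H ^ 2 / (2 * mL ^ 2) + 1) := le_max_right _ _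
  have h2 : H ^ 2 / (2 * mL ^ 2) * (2 * mL ^ 2) = H ^ 2 := div_mul_cancel₀ _ (by positivity)
  nlinarith [mul_le_mul_of_nonneg_left h1 (by positivity : (0:ℝ) ≤ 2 * mL ^ 2)]

/-- Sum bound: if two of the distances are `≥ R/2` and the third is at
least its (positive) contact value, the potential magnitude is controlled. -/
lemma bound3 (x y z mx my mz cz Mm M0 R : ℝ) (hR : 0 < R)
    (hx : R / 2 ≤ x) (hy : R / 2 ≤ y) (hz : cz ≤ z) (hcz : 0 < cz)
    (hmz : 0 ≤ mz)
    (hMm : 0 ≤ Mm) (hmxM : mx ≤ Mm) (hmyM : my ≤ Mm) (hzM : mz / cz ≤ M0) :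
    mx / x + my / y + mz / z ≤ M0 + 4 * Mm / R := by
  have e : Mm / (R / 2) = 2 * Mm / R := by field_simp
  have h1 : mx / x ≤ Mm / (R / 2) := div_le_div₀ hMm hmxM (by positivity) hx
  have h2 : my / y ≤ Mm / (R / 2) := div_le_div₀ hMm hmyM (by positivity) hy
  have h3 : mz / z ≤ mz / cz := div_le_div_of_nonneg_left hmz hcz hz
  rw [e] at h1 h2
  have h4 : 2 * Mm / R + 2 * Mm / R = 4 * Mm / R := by ring
  linarith

/-- Coercivity: far from the origin the amended potential is bounded below by
`-M0 - 4 Mm / R`. -/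
lemma far_bound (r1 r2 r3 m1 m2 m3 IS H M0 Mm R : ℝ)
    (hr1 : 0 < r1) (hr2 : 0 < r2) (hr3 : 0 < r3)
    (hm1 : 0 < m1) (hm2 : 0 < m2) (hm3 : 0 < m3) (hIS : 0 < IS)
    (hAM : m1 * m2 / (r1 + r2) ≤ M0) (hBM : m2 * m3 / (r2 + r3) ≤ M0)
    (hCM : m3 * m1 / (r3 + r1) ≤ M0)
    (hmA : m1 * m2 ≤ Mm) (hmB : m2 * m3 ≤ Mm) (hmC : m3 * m1 ≤ Mm)
    (hMm : 0 ≤ Mm) (hR : 0 < R) :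
    ∀ q ∈ admissibleSet r1 r2 r3, R ≤ ‖q‖ →
      -M0 - 4 * Mm / R ≤ amendedPotential m1 m2 m3 IS H q := by
  rintro ⟨a, b, c⟩ ⟨h1, h2, h3, h4, h5, h6⟩ hRq
  simp only at h1 h2 h3 h4 h5 h6
  have ha : 0 < a := by linarith
  have hb : 0 < b := by linarith
  have hc : 0 < c := by linarith
  have hnorm : ‖((a, b, c) : ℝ × ℝ × ℝ)‖ = max a (max b c) := by
    simp [Prod.norm_def, Real.norm_eq_abs, abs_of_pos ha, abs_of_pos hb, abs_of_pos hc]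
  rw [hnorm] at hRq
  have hval : amendedPotential m1 m2 m3 IS H (a, b, c) =
      H ^ 2 / (2 * (m1 * m2 * a ^ 2 + m2 * m3 * b ^ 2 + m3 * m1 * c ^ 2 + IS))
        - (m1 * m2 / a + m2 * m3 / b + m3 * m1 / c) := rfl
  have hpos : 0 ≤ H ^ 2 / (2 * (m1 * m2 * a ^ 2 + m2 * m3 * b ^ 2 + m3 * m1 * c ^ 2 + IS)) := by
    positivity
  have hsum : m1 * m2 / a + m2 * m3 / b + m3 * m1 / c ≤ M0 + 4 * Mm / R := by
    rcases le_max_iff.mp hRq with hma | hmbc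
    · rcases le_or_gt (R / 2) b with hbig | hsmall
      · have := bound3 a b c (m1 * m2) (m2 * m3) (m3 * m1) (r3 + r1) Mm M0 R hR
          (by linarith) hbig h3 (by positivity) (by positivity) hMm hmA hmB hCM
        linarith
      · have hcbig : R / 2 ≤ c := by linarith
        have := bound3 a c b (m1 * m2) (m3 * m1) (m2 * m3) (r2 + r3) Mm M0 R hR
          (by linarith) hcbig h2 (by positivity) (by positivity) hMm hmA hmC hBM
        linarith
    · rcases le_max_iff.mp hmbc with hmb | hmc
      · rcases le_or_gt (R / 2) c with hbig | hsmall
        · have := bound3 b c a (m2 * m3) (m3 * m1) (m1 * m2) (r1 + r2) Mm M0 R hR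
            (by linarith) hbig h1 (by positivity) (by positivity) hMm hmB hmC hAM
          linarith
        · have habig : R / 2 ≤ a := by linarith
          have := bound3 b a c (m2 * m3) (m1 * m2) (m3 * m1) (r3 + r1) Mm M0 R hR
            (by linarith) habig h3 (by positivity) (by positivity) hMm hmB hmA hCM
          linarith
      · rcases le_or_gt (R / 2) a with hbig | hsmall
        · have := bound3 c a b (m3 * m1) (m1 * m2) (m2 * m3) (r2 + r3) Mm M0 R hR
            (by linarith) hbig h2 (by positivity) (by positivity) hMm hmC hmA hBM
          linarith
        · have hbbig : R / 2 ≤ b := by linarith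
          have := bound3 c b a (m3 * m1) (m2 * m3) (m1 * m2) (r1 + r2) Mm M0 R hR
            (by linarith) hbbig h1 (by positivity) (by positivity) hMm hmC hmB hAM
          linarith
  rw [hval]
  linarith

/-- There is an admissible point whose amended potential lies strictly below
minus the largest single contact term. -/
lemma good_point (r1 r2 r3 m1 m2 m3 IS H : ℝ)
    (hr1 : 0 < r1) (hr2 : 0 < r2) (hr3 : 0 < r3)
    (hm1 : 0 < m1) (hm2 : 0 < m2) (hm3 : 0 < m3) (hIS : 0 < IS) :
    ∃ p ∈ admissibleSet r1 r2 r3, amendedPotential m1 m2 m3 IS H p <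
      -(max (m1 * m2 / (r1 + r2)) (max (m2 * m3 / (r2 + r3)) (m3 * m1 / (r3 + r1)))) := by
  have ht0 : (0:ℝ) < max (r1 + r2) (max (r2 + r3) (r3 + r1)) := by positivity
  rcases le_total (m2 * m3 / (r2 + r3)) (m1 * m2 / (r1 + r2)) with hBA | hAB
  · rcases le_total (m3 * m1 / (r3 + r1)) (m1 * m2 / (r1 + r2)) with hCA | hAC
    · -- pair (1,2) realizes the max
      have hM0A : max (m1 * m2 / (r1 + r2)) (max (m2 * m3 / (r2 + r3)) (m3 * m1 / (r3 + r1)))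
          = m1 * m2 / (r1 + r2) := max_eq_left (max_le hBA hCA)
      obtain ⟨T, hTt0, hT0, hTH⟩ :=
        exists_T (m2 * m3 + m3 * m1) H (max (r1 + r2) (max (r2 + r3) (r3 + r1)))
          (by positivity) ht0
      have hT1 : r1 + r2 ≤ T := le_trans (le_max_left _ _) hTt0
      have hT2 : r2 + r3 ≤ T := le_trans (le_max_of_le_right (le_max_left _ _)) hTt0
      have hT3 : r3 + r1 ≤ T := le_trans (le_max_of_le_right (le_max_right _ _)) hTt0
      refine ⟨(r1 + r2, T, T), ⟨le_rfl, hT2, hT3, by dsimp only; linarith, by dsimp only; linarith, by dsimp only; linarith⟩, ?_⟩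
      have e : amendedPotential m1 m2 m3 IS H (r1 + r2, T, T) =
          H ^ 2 / (2 * (m1 * m2 * (r1 + r2) ^ 2 + (m2 * m3 + m3 * m1) * T ^ 2 + IS))
            - (m1 * m2 / (r1 + r2) + (m2 * m3 + m3 * m1) / T) := by
        unfold amendedPotential
        rw [show m1 * m2 * ((r1 + r2, T, T) : ℝ × ℝ × ℝ).1 ^ 2
              + m2 * m3 * ((r1 + r2, T, T) : ℝ × ℝ × ℝ).2.1 ^ 2
              + m3 * m1 * ((r1 + r2, T, T) : ℝ × ℝ × ℝ).2.2 ^ 2 + IS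
            = m1 * m2 * (r1 + r2) ^ 2 + (m2 * m3 + m3 * m1) * T ^ 2 + IS from by ring]
        ring
      rw [e, hM0A]
      exact key_good (m1 * m2) (m2 * m3 + m3 * m1) (r1 + r2) T IS H
        (by positivity) (by positivity) (by positivity) hT0 hIS hTH
    · -- pair (3,1) realizes the max
      have hM0C : max (m1 * m2 / (r1 + r2)) (max (m2 * m3 / (r2 + r3)) (m3 * m1 / (r3 + r1)))
          = m3 * m1 / (r3 + r1) := by
        rw [max_eq_right (le_max_of_le_right hAC), max_eq_right (le_trans hBA hAC)]
      obtain ⟨T, hTt0, hT0, hTH⟩ :=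
        exists_T (m1 * m2 + m2 * m3) H (max (r1 + r2) (max (r2 + r3) (r3 + r1)))
          (by positivity) ht0
      have hT1 : r1 + r2 ≤ T := le_trans (le_max_left _ _) hTt0
      have hT2 : r2 + r3 ≤ T := le_trans (le_max_of_le_right (le_max_left _ _)) hTt0
      have hT3 : r3 + r1 ≤ T := le_trans (le_max_of_le_right (le_max_right _ _)) hTt0
      refine ⟨(T, T, r3 + r1), ⟨hT1, hT2, le_rfl, by dsimp only; linarith, by dsimp only; linarith, by dsimp only; linarith⟩, ?_⟩
      have e : amendedPotential m1 m2 m3 IS H (T, T, r3 + r1) =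
          H ^ 2 / (2 * (m3 * m1 * (r3 + r1) ^ 2 + (m1 * m2 + m2 * m3) * T ^ 2 + IS))
            - (m3 * m1 / (r3 + r1) + (m1 * m2 + m2 * m3) / T) := by
        unfold amendedPotential
        rw [show m1 * m2 * ((T, T, r3 + r1) : ℝ × ℝ × ℝ).1 ^ 2
              + m2 * m3 * ((T, T, r3 + r1) : ℝ × ℝ × ℝ).2.1 ^ 2
              + m3 * m1 * ((T, T, r3 + r1) : ℝ × ℝ × ℝ).2.2 ^ 2 + IS
            = m3 * m1 * (r3 + r1) ^ 2 + (m1 * m2 + m2 * m3) * T ^ 2 + IS from by ring]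
        ring
      rw [e, hM0C]
      exact key_good (m3 * m1) (m1 * m2 + m2 * m3) (r3 + r1) T IS H
        (by positivity) (by positivity) (by positivity) hT0 hIS hTH
  · rcases le_total (m3 * m1 / (r3 + r1)) (m2 * m3 / (r2 + r3)) with hCB | hBC
    · -- pair (2,3) realizes the max
      have hM0B : max (m1 * m2 / (r1 + r2)) (max (m2 * m3 / (r2 + r3)) (m3 * m1 / (r3 + r1)))
          = m2 * m3 / (r2 + r3) := by
        rw [max_eq_left hCB, max_eq_right hAB]
      obtain ⟨T, hTt0, hT0, hTH⟩ :=
        exists_T (m1 * m2 + m3 * m1) H (max (r1 + r2) (max (r2 + r3) (r3 + r1)))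
          (by positivity) ht0
      have hT1 : r1 + r2 ≤ T := le_trans (le_max_left _ _) hTt0
      have hT2 : r2 + r3 ≤ T := le_trans (le_max_of_le_right (le_max_left _ _)) hTt0
      have hT3 : r3 + r1 ≤ T := le_trans (le_max_of_le_right (le_max_right _ _)) hTt0
      refine ⟨(T, r2 + r3, T), ⟨hT1, le_rfl, hT3, by dsimp only; linarith, by dsimp only; linarith, by dsimp only; linarith⟩, ?_⟩
      have e : amendedPotential m1 m2 m3 IS H (T, r2 + r3, T) =
          H ^ 2 / (2 * (m2 * m3 * (r2 + r3) ^ 2 + (m1 * m2 + m3 * m1) * T ^ 2 + IS))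
            - (m2 * m3 / (r2 + r3) + (m1 * m2 + m3 * m1) / T) := by
        unfold amendedPotential
        rw [show m1 * m2 * ((T, r2 + r3, T) : ℝ × ℝ × ℝ).1 ^ 2
              + m2 * m3 * ((T, r2 + r3, T) : ℝ × ℝ × ℝ).2.1 ^ 2
              + m3 * m1 * ((T, r2 + r3, T) : ℝ × ℝ × ℝ).2.2 ^ 2 + IS
            = m2 * m3 * (r2 + r3) ^ 2 + (m1 * m2 + m3 * m1) * T ^ 2 + IS from by ring]
        ring
      rw [e, hM0B]
      exact key_good (m2 * m3) (m1 * m2 + m3 * m1) (r2 + r3) T IS H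
        (by positivity) (by positivity) (by positivity) hT0 hIS hTH
    · -- pair (3,1) realizes the max
      have hM0C : max (m1 * m2 / (r1 + r2)) (max (m2 * m3 / (r2 + r3)) (m3 * m1 / (r3 + r1)))
          = m3 * m1 / (r3 + r1) := by
        rw [max_eq_right hBC, max_eq_right (le_trans hAB hBC)]
      obtain ⟨T, hTt0, hT0, hTH⟩ :=
        exists_T (m1 * m2 + m2 * m3) H (max (r1 + r2) (max (r2 + r3) (r3 + r1)))
          (by positivity) ht0
      have hT1 : r1 + r2 ≤ T := le_trans (le_max_left _ _) hTt0
      have hT2 : r2 + r3 ≤ T := le_trans (le_max_of_le_right (le_max_left _ _)) hTt0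
      have hT3 : r3 + r1 ≤ T := le_trans (le_max_of_le_right (le_max_right _ _)) hTt0
      refine ⟨(T, T, r3 + r1), ⟨hT1, hT2, le_rfl, by dsimp only; linarith, by dsimp only; linarith, by dsimp only; linarith⟩, ?_⟩
      have e : amendedPotential m1 m2 m3 IS H (T, T, r3 + r1) =
          H ^ 2 / (2 * (m3 * m1 * (r3 + r1) ^ 2 + (m1 * m2 + m2 * m3) * T ^ 2 + IS))
            - (m3 * m1 / (r3 + r1) + (m1 * m2 + m2 * m3) / T) := by
        unfold amendedPotential
        rw [show m1 * m2 * ((T, T, r3 + r1) : ℝ × ℝ × ℝ).1 ^ 2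
              + m2 * m3 * ((T, T, r3 + r1) : ℝ × ℝ × ℝ).2.1 ^ 2
              + m3 * m1 * ((T, T, r3 + r1) : ℝ × ℝ × ℝ).2.2 ^ 2 + IS
            = m3 * m1 * (r3 + r1) ^ 2 + (m1 * m2 + m2 * m3) * T ^ 2 + IS from by ring]
        ring
      rw [e, hM0C]
      exact key_good (m3 * m1) (m1 * m2 + m2 * m3) (r3 + r1) T IS H
        (by positivity) (by positivity) (by positivity) hT0 hIS hTH

/-- For every angular momentum `H ≥ 0`, the amended potential attains a global
minimum on the admissible configuration set. -/
theorem amendedPotential_exists_global_min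
    (r1 r2 r3 m1 m2 m3 IS : ℝ)
    (hr1 : 0 < r1) (hr2 : 0 < r2) (hr3 : 0 < r3)
    (hm1 : 0 < m1) (hm2 : 0 < m2) (hm3 : 0 < m3)
    (hIS : 0 < IS) (H : ℝ) (hH : 0 ≤ H) :
    ∃ p ∈ admissibleSet r1 r2 r3, ∀ q ∈ admissibleSet r1 r2 r3,
      amendedPotential m1 m2 m3 IS H p ≤ amendedPotential m1 m2 m3 IS H q := by
  -- continuity
  have hc1 : Continuous fun d : ℝ × ℝ × ℝ => d.1 := continuous_fst
  have hc2 : Continuous fun d : ℝ × ℝ × ℝ => d.2.1 := continuous_snd.fst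
  have hc3 : Continuous fun d : ℝ × ℝ × ℝ => d.2.2 := continuous_snd.snd
  have hcont : ContinuousOn (amendedPotential m1 m2 m3 IS H) (admissibleSet r1 r2 r3) := by
    unfold amendedPotential
    apply ContinuousOn.sub
    · apply ContinuousOn.div continuousOn_const
      · fun_prop
      · intro d _
        nlinarith [mul_nonneg (mul_nonneg hm1.le hm2.le) (sq_nonneg d.1),
          mul_nonneg (mul_nonneg hm2.le hm3.le) (sq_nonneg d.2.1),
          mul_nonneg (mul_nonneg hm3.le hm1.le) (sq_nonneg d.2.2)]
    · apply ContinuousOn.add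
      apply ContinuousOn.add
      · exact continuousOn_const.div hc1.continuousOn (fun d hd => by
          have := hd.1; nlinarith)
      · exact continuousOn_const.div hc2.continuousOn (fun d hd => by
          have := hd.2.1; nlinarith)
      · exact continuousOn_const.div hc3.continuousOn (fun d hd => by
          have := hd.2.2.1; nlinarith)
  -- closedness
  have hSclosed : IsClosed (admissibleSet r1 r2 r3) := by
    unfold admissibleSet
    simp only [Set.setOf_and]
    exact ((isClosed_le continuous_const hc1).inter
      ((isClosed_le continuous_const hc2).inter
      ((isClosed_le continuous_const hc3).inter
      ((isClosed_le hc1 (hc2.add hc3)).inter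
      ((isClosed_le hc2 (hc3.add hc1)).inter
      (isClosed_le hc3 (hc1.add hc2)))))))
  -- the good point and the threshold constants, made opaque
  obtain ⟨p₀, hp₀S, hp₀lt⟩ := good_point r1 r2 r3 m1 m2 m3 IS H hr1 hr2 hr3 hm1 hm2 hm3 hIS
  obtain ⟨M0, hM0⟩ : ∃ M0 : ℝ,
      M0 = max (m1 * m2 / (r1 + r2)) (max (m2 * m3 / (r2 + r3)) (m3 * m1 / (r3 + r1))) :=
    ⟨_, rfl⟩
  rw [← hM0] at hp₀lt
  obtain ⟨Mm, hMmdef⟩ : ∃ Mm : ℝ, Mm = m1 * m2 + m2 * m3 + m3 * m1 := ⟨_, rfl⟩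
  have hMmpos : 0 < Mm := by rw [hMmdef]; positivity
  have hAM : m1 * m2 / (r1 + r2) ≤ M0 := hM0 ▸ le_max_left _ _
  have hBM : m2 * m3 / (r2 + r3) ≤ M0 := hM0 ▸ le_max_of_le_right (le_max_left _ _)
  have hCM : m3 * m1 / (r3 + r1) ≤ M0 := hM0 ▸ le_max_of_le_right (le_max_right _ _)
  have hmA : m1 * m2 ≤ Mm := by rw [hMmdef]; nlinarith [mul_pos hm2 hm3, mul_pos hm3 hm1]
  have hmB : m2 * m3 ≤ Mm := by rw [hMmdef]; nlinarith [mul_pos hm1 hm2, mul_pos hm3 hm1]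
  have hmC : m3 * m1 ≤ Mm := by rw [hMmdef]; nlinarith [mul_pos hm1 hm2, mul_pos hm2 hm3]
  -- choose the radius
  obtain ⟨δ, hδdef⟩ : ∃ δ : ℝ, δ = -M0 - amendedPotential m1 m2 m3 IS H p₀ := ⟨_, rfl⟩
  have hδpos : 0 < δ := by rw [hδdef]; linarith
  obtain ⟨R, hRdef⟩ : ∃ R : ℝ, R = 4 * Mm / δ + 1 := ⟨_, rfl⟩
  have hRpos : 0 < R := by rw [hRdef]; positivity
  have hRδ : 4 * Mm / R < δ := by
    rw [div_lt_iff₀ hRpos, hRdef]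
    have h : δ * (4 * Mm / δ) = 4 * Mm := by field_simp
    nlinarith
  have hfar := far_bound r1 r2 r3 m1 m2 m3 IS H M0 Mm R hr1 hr2 hr3 hm1 hm2 hm3 hIS
    hAM hBM hCM hmA hmB hmC hMmpos.le hRpos
  -- compactness and conclusion
  obtain ⟨R', hR'1, hR'2⟩ : ∃ R' : ℝ, R ≤ R' ∧ ‖p₀‖ ≤ R' :=
    ⟨max R ‖p₀‖, le_max_left _ _, le_max_right _ _⟩
  have hKcomp : IsCompact (admissibleSet r1 r2 r3 ∩ Metric.closedBall 0 R') :=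
    (isCompact_closedBall (0 : ℝ × ℝ × ℝ) R').of_isClosed_subset
      (hSclosed.inter Metric.isClosed_closedBall) Set.inter_subset_right
  have hp₀K : p₀ ∈ admissibleSet r1 r2 r3 ∩ Metric.closedBall 0 R' :=
    ⟨hp₀S, by rwa [Metric.mem_closedBall, dist_zero_right]⟩
  obtain ⟨x, hxK, hxmin⟩ :=
    hKcomp.exists_isMinOn ⟨p₀, hp₀K⟩ (hcont.mono Set.inter_subset_left)
  refine ⟨x, hxK.1, ?_⟩
  intro q hq
  by_cases hqb : ‖q‖ ≤ R'
  · exact isMinOn_iff.mp hxmin q ⟨hq, by rwa [Metric.mem_closedBall, dist_zero_right]⟩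
  · push_neg at hqb
    have hRq : R ≤ ‖q‖ := le_trans hR'1 hqb.le
    have h1 := hfar q hq hRq
    have h2 : amendedPotential m1 m2 m3 IS H x ≤ amendedPotential m1 m2 m3 IS H p₀ :=
      isMinOn_iff.mp hxmin p₀ hp₀K
    linarith
end

section
/- Let I, U : ℝ → ℝ be twice continuously differentiable on an open interval containing q*, with I(q) > 0 and I'(q) > 0 on this interval, and set 𝓔(H, q) = H²/(2 I(q)) + U(q). Suppose h is differentiable on a neighborhood of q* with h(q*) = H* > 0 and ∂𝓔/∂q(h(q), q) = 0 for all q in this neighborhood. If h'(q*) < 0 (a family of relative equilibria moving toward smaller q under increasing angular momentum, i.e. ending in a termination fission) then ∂²𝓔/∂q²(H*, q*) < 0, so the relative equilibrium is energetically unstable in the degree of freedom q; if h'(q*) > 0 (a family emanating from a transition fission) then ∂²𝓔/∂q²(H*, q*) > 0, so the relative equilibrium is energetically stable in the degree of freedom q. -/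
/-!
Write the amended potential as `𝓔(H, q) = H² K(q) + U(q)` with `K = (2 I)⁻¹`. Differentiating the
equilibrium condition `h(q)² K'(q) + U'(q) = 0` at `q*` gives
`∂²𝓔/∂q²(H*, q*) = H*² K''(q*) + U''(q*) = -2 H* h'(q*) K'(q*)`, and `K' = -I'/(2 I²) < 0`,
so this second derivative has the sign of `h'(q*)`.
-/

open Filter Topology

section Calculus

variable {𝕜 : Type*} [NontriviallyNormedField 𝕜] {f : 𝕜 → 𝕜} {s : Set 𝕜} {x : 𝕜}

theorem ContDiffOn.eventually_differentiableAt_of_isOpen {n : WithTop ℕ∞}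
    (hf : ContDiffOn 𝕜 n f s) (hs : IsOpen s) (hx : x ∈ s) (hn : n ≠ 0) :
    ∀ᶠ y in 𝓝 x, DifferentiableAt 𝕜 f y := by
  filter_upwards [hs.mem_nhds hx] with y hy
  exact (hf.differentiableOn hn).differentiableAt (hs.mem_nhds hy)

theorem ContDiffOn.differentiableAt_deriv_of_isOpen (hf : ContDiffOn 𝕜 2 f s) (hs : IsOpen s)
    (hx : x ∈ s) : DifferentiableAt 𝕜 (deriv f) x :=
  ((hf.deriv_of_isOpen hs (m := 1) (by norm_num)).differentiableOn one_ne_zero).differentiableAt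
    (hs.mem_nhds hx)

theorem deriv_const_mul_add {K U : 𝕜 → 𝕜} (c : 𝕜) (hK : DifferentiableAt 𝕜 K x)
    (hU : DifferentiableAt 𝕜 U x) :
    deriv (fun y => c * K y + U y) x = c * deriv K x + deriv U x := by
  rw [deriv_fun_add (hK.const_mul c) hU, deriv_const_mul _ hK]

theorem deriv_deriv_eq_of_eventually_critical {K U c : 𝕜 → 𝕜} {q₀ : 𝕜}
    (hK : ∀ᶠ x in 𝓝 q₀, DifferentiableAt 𝕜 K x) (hU : ∀ᶠ x in 𝓝 q₀, DifferentiableAt 𝕜 U x)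
    (hK' : DifferentiableAt 𝕜 (deriv K) q₀) (hU' : DifferentiableAt 𝕜 (deriv U) q₀)
    (hc : DifferentiableAt 𝕜 c q₀)
    (hcrit : ∀ᶠ q in 𝓝 q₀, deriv (fun x => c q * K x + U x) q = 0) :
    deriv (deriv fun x => c q₀ * K x + U x) q₀ = -(deriv c q₀ * deriv K q₀) := by
  have hfirst : ∀ a, deriv (fun x => a * K x + U x) =ᶠ[𝓝 q₀]
      fun x => a * deriv K x + deriv U x := fun a => by
    filter_upwards [hK, hU] with x hKx hUx using deriv_const_mul_add a hKx hUx
  have hzero : (fun q => c q * deriv K q + deriv U q) =ᶠ[𝓝 q₀] fun _ => 0 := by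
    filter_upwards [hcrit, hK, hU] with q hq hKq hUq
    rwa [← deriv_const_mul_add (c q) hKq hUq]
  have hdiff := ((hc.hasDerivAt.mul hK'.hasDerivAt).add hU'.hasDerivAt).unique
    ((hasDerivAt_const q₀ 0).congr_of_eventuallyEq hzero)
  rw [(hfirst (c q₀)).deriv_eq, ((hK'.hasDerivAt.const_mul (c q₀)).fun_add hU'.hasDerivAt).deriv]
  linear_combination hdiff

end Calculus

theorem deriv_inv_neg_of_deriv_pos {f : ℝ → ℝ} {x : ℝ} (hf : DifferentiableAt ℝ f x)
    (hx : f x ≠ 0) (hf' : 0 < deriv f x) : deriv (fun y => (f y)⁻¹) x < 0 := by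
  rw [deriv_fun_inv'' hf hx]
  exact div_neg_of_neg_of_pos (neg_neg_of_pos hf') (by positivity)

/-- Corollary on fission bifurcations: with `𝓔(H,q) = H²/(2 I q) + U q`,
`I, I' > 0` on an open interval containing `q*`, and `q ↦ h q` parameterizing
the family of relative equilibria (`∂𝓔/∂q(h q, q) = 0` near `q*`,
`h q* = H* > 0`): if `h'(q*) < 0` (family ending in a termination fission) then
`∂²𝓔/∂q²(H*, q*) < 0` (energetically unstable in `q`); if `h'(q*) > 0`
(family emanating from a transition fission) then `∂²𝓔/∂q²(H*, q*) > 0`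
(energetically stable in `q`). -/
theorem termination_fission_unstable_transition_fission_stable
    (I U h : ℝ → ℝ) (qstar Hstar a b : ℝ)
    (hmem : qstar ∈ Set.Ioo a b)
    (hI : ContDiffOn ℝ 2 I (Set.Ioo a b)) (hU : ContDiffOn ℝ 2 U (Set.Ioo a b))
    (hIpos : ∀ q ∈ Set.Ioo a b, 0 < I q)
    (hI'pos : ∀ q ∈ Set.Ioo a b, 0 < deriv I q)
    (hHstar : 0 < Hstar) (hhq : h qstar = Hstar)
    (hhdiff : ∀ᶠ q in nhds qstar, DifferentiableAt ℝ h q)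
    (hequil : ∀ᶠ q in nhds qstar,
      deriv (fun x => (h q) ^ 2 / (2 * I x) + U x) q = 0) :
    (deriv h qstar < 0 →
        deriv (deriv (fun x => Hstar ^ 2 / (2 * I x) + U x)) qstar < 0) ∧
      (0 < deriv h qstar →
        0 < deriv (deriv (fun x => Hstar ^ 2 / (2 * I x) + U x)) qstar) := by
  have hs : IsOpen (Set.Ioo a b) := isOpen_Ioo
  set K : ℝ → ℝ := fun x => (2 * I x)⁻¹
  have hamended : ∀ H, (fun x => H ^ 2 / (2 * I x) + U x) = fun x => H ^ 2 * K x + U x :=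
    fun H => by simp only [div_eq_mul_inv, K]
  have hK : ContDiffOn ℝ 2 K (Set.Ioo a b) :=
    (contDiffOn_const.mul hI).inv fun x hx => (mul_pos two_pos (hIpos x hx)).ne'
  have hK'neg : deriv K qstar < 0 := by
    have hId := (hI.differentiableOn two_ne_zero).differentiableAt (hs.mem_nhds hmem)
    refine deriv_inv_neg_of_deriv_pos (hId.const_mul 2) (mul_pos two_pos (hIpos _ hmem)).ne' ?_
    rw [deriv_const_mul _ hId]
    exact mul_pos two_pos (hI'pos _ hmem)
  have hh := hhdiff.self_of_nhds
  have hsecond : deriv (deriv fun x => Hstar ^ 2 / (2 * I x) + U x) qstar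
      = -(2 * Hstar * deriv h qstar * deriv K qstar) := by
    rw [hamended, ← hhq, deriv_deriv_eq_of_eventually_critical (c := fun q => h q ^ 2)
      (hK.eventually_differentiableAt_of_isOpen hs hmem two_ne_zero)
      (hU.eventually_differentiableAt_of_isOpen hs hmem two_ne_zero)
      (hK.differentiableAt_deriv_of_isOpen hs hmem) (hU.differentiableAt_deriv_of_isOpen hs hmem)
      (hh.pow 2) (by simpa only [hamended] using hequil), deriv_fun_pow hh]
    ring
  rw [hsecond]
  constructor
  · intro hneg
    linarith [mul_pos_of_neg_of_neg (mul_neg_of_pos_of_neg hHstar hneg) hK'neg]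
  · intro hpos
    linarith [mul_neg_of_pos_of_neg (mul_pos hHstar hpos) hK'neg]
end

section
/- For every μ > 0, the function x ↦ F(μ, x) is strictly decreasing and strictly convex on (0, ∞): its first derivative in x is strictly negative and its second derivative in x is strictly positive for all x > 0. -/
/-!
On `(0, ∞)`, `F μ` is the product of `1 + μ x⁻²` and `(1 + μx)⁻¹ = μ⁻¹ (x + μ⁻¹)⁻¹`, both
positive, strictly decreasing and convex, being built from the negative powers `x⁻²`, `x⁻¹`.
For such `f`, `g` we get `(fg)' = f'g + fg' < 0` and `(fg)'' = f''g + 2f'g' + fg'' > 0`,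
strictly because `f'g' > 0`.
-/

noncomputable def F (μ x : ℝ) : ℝ := (1 + μ / x ^ 2) / (1 + μ * x)

open Filter Topology

structure IsPosAntiConvexAt (f : ℝ → ℝ) (x : ℝ) : Prop where
  eventually_differentiableAt : ∀ᶠ y in 𝓝 x, DifferentiableAt ℝ f y
  differentiableAt_deriv : DifferentiableAt ℝ (deriv f) x
  pos : 0 < f x
  deriv_neg : deriv f x < 0
  deriv_deriv_nonneg : 0 ≤ deriv (deriv f) x

namespace IsPosAntiConvexAt

variable {f g : ℝ → ℝ} {x : ℝ}

theorem differentiableAt (hf : IsPosAntiConvexAt f x) : DifferentiableAt ℝ f x :=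
  hf.eventually_differentiableAt.self_of_nhds

theorem const_add (hf : IsPosAntiConvexAt f x) {c : ℝ} (hc : 0 ≤ c) :
    IsPosAntiConvexAt (fun y => c + f y) x where
  eventually_differentiableAt := hf.eventually_differentiableAt.mono fun _ h => h.const_add c
  differentiableAt_deriv := by simpa only [deriv_const_add'] using hf.differentiableAt_deriv
  pos := add_pos_of_nonneg_of_pos hc hf.pos
  deriv_neg := by simpa only [deriv_const_add'] using hf.deriv_neg
  deriv_deriv_nonneg := by simpa only [deriv_const_add'] using hf.deriv_deriv_nonneg

theorem const_mul (hf : IsPosAntiConvexAt f x) {c : ℝ} (hc : 0 < c) :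
    IsPosAntiConvexAt (fun y => c * f y) x where
  eventually_differentiableAt := hf.eventually_differentiableAt.mono fun _ h => h.const_mul c
  differentiableAt_deriv := by
    simpa only [deriv_const_mul_field'] using hf.differentiableAt_deriv.const_mul c
  pos := mul_pos hc hf.pos
  deriv_neg := by simpa only [deriv_const_mul_field'] using mul_neg_of_pos_of_neg hc hf.deriv_neg
  deriv_deriv_nonneg := by
    simpa only [deriv_const_mul_field'] using mul_nonneg hc.le hf.deriv_deriv_nonneg

theorem comp_add_const {a : ℝ} (hf : IsPosAntiConvexAt f (x + a)) :
    IsPosAntiConvexAt (fun y => f (y + a)) x := by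
  have hderiv : deriv (fun y => f (y + a)) = fun y => deriv f (y + a) :=
    funext fun _ => deriv_comp_add_const f a _
  refine ⟨?_, ?_, hf.pos, ?_, ?_⟩
  · exact ((continuous_add_const a).continuousAt.eventually hf.eventually_differentiableAt).mono
      fun _ h => differentiableAt_comp_add_const.mpr h
  · rw [hderiv]
    exact differentiableAt_comp_add_const.mpr hf.differentiableAt_deriv
  · simpa only [hderiv] using hf.deriv_neg
  · simpa only [hderiv, deriv_comp_add_const] using hf.deriv_deriv_nonneg

theorem deriv_mul_neg (hf : IsPosAntiConvexAt f x) (hg : IsPosAntiConvexAt g x) :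
    deriv (f * g) x < 0 := by
  rw [deriv_mul hf.differentiableAt hg.differentiableAt]
  exact add_neg (mul_neg_of_neg_of_pos hf.deriv_neg hg.pos)
    (mul_neg_of_pos_of_neg hf.pos hg.deriv_neg)

theorem deriv_deriv_mul_pos (hf : IsPosAntiConvexAt f x) (hg : IsPosAntiConvexAt g x) :
    0 < deriv (deriv (f * g)) x := by
  have hderiv : deriv (f * g) =ᶠ[𝓝 x] deriv f * g + f * deriv g := by
    filter_upwards [hf.eventually_differentiableAt, hg.eventually_differentiableAt] with y hfy hgy
    exact deriv_mul hfy hgy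
  have hderiv2 : deriv (deriv (f * g)) x = deriv (deriv f) x * g x + deriv f x * deriv g x +
      (deriv f x * deriv g x + f x * deriv (deriv g) x) := by
    rw [hderiv.deriv_eq]
    exact ((hf.differentiableAt_deriv.hasDerivAt.mul hg.differentiableAt.hasDerivAt).add
      (hf.differentiableAt.hasDerivAt.mul hg.differentiableAt_deriv.hasDerivAt)).deriv
  rw [hderiv2]
  nlinarith [mul_pos_of_neg_of_neg hf.deriv_neg hg.deriv_neg,
    mul_nonneg hf.deriv_deriv_nonneg hg.pos.le, mul_nonneg hf.pos.le hg.deriv_deriv_nonneg]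

end IsPosAntiConvexAt

theorem isPosAntiConvexAt_zpow {m : ℤ} (hm : m < 0) {x : ℝ} (hx : 0 < x) :
    IsPosAntiConvexAt (fun y => y ^ m) x where
  eventually_differentiableAt := (lt_mem_nhds hx).mono fun _ hy =>
    differentiableAt_zpow.mpr (Or.inl hy.ne')
  differentiableAt_deriv := by
    rw [deriv_zpow']
    exact (differentiableAt_zpow.mpr (Or.inl hx.ne')).const_mul _
  pos := zpow_pos hx m
  deriv_neg := by
    rw [deriv_zpow]
    exact mul_neg_of_neg_of_pos (by exact_mod_cast hm) (zpow_pos hx _)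
  deriv_deriv_nonneg := by
    have hm' : ((m - 1 : ℤ) : ℝ) < 0 := by exact_mod_cast (sub_lt_self m one_pos).trans hm
    simp only [deriv_zpow', deriv_const_mul_field', ← mul_assoc]
    exact (mul_pos (mul_pos_of_neg_of_neg (by exact_mod_cast hm) hm') (zpow_pos hx _)).le

theorem F_eq_mul {μ : ℝ} (hμ : 0 < μ) :
    F μ = (fun y => 1 + μ * y ^ (-2 : ℤ)) * fun y => μ⁻¹ * (y + μ⁻¹) ^ (-1 : ℤ) := by
  funext y
  simp only [F, Pi.mul_apply, zpow_neg, zpow_ofNat, pow_one, div_eq_mul_inv]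
  rw [← mul_inv, mul_add, mul_inv_cancel₀ hμ.ne', add_comm (μ * y)]

/-- For every `μ > 0`, `x ↦ F(μ, x)` is strictly decreasing and strictly convex
on `(0, ∞)`: its first derivative is strictly negative and its second
derivative is strictly positive for all `x > 0`. -/
theorem F_strictAnti_strictConvex (μ : ℝ) (hμ : 0 < μ) :
    StrictAntiOn (F μ) (Set.Ioi 0) ∧
      StrictConvexOn ℝ (Set.Ioi 0) (F μ) ∧
      ∀ x : ℝ, 0 < x → deriv (F μ) x < 0 ∧ 0 < deriv (deriv (F μ)) x := by
  have hfactors (x : ℝ) (hx : 0 < x) :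
      IsPosAntiConvexAt (fun y => 1 + μ * y ^ (-2 : ℤ)) x ∧
        IsPosAntiConvexAt (fun y => μ⁻¹ * (y + μ⁻¹) ^ (-1 : ℤ)) x :=
    ⟨((isPosAntiConvexAt_zpow (by norm_num) hx).const_mul hμ).const_add zero_le_one,
      ((isPosAntiConvexAt_zpow (by norm_num) (by positivity)).comp_add_const).const_mul
        (inv_pos.mpr hμ)⟩
  have hderivs (x : ℝ) (hx : 0 < x) : deriv (F μ) x < 0 ∧ 0 < deriv (deriv (F μ)) x := by
    obtain ⟨hf, hg⟩ := hfactors x hx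
    rw [F_eq_mul hμ]
    exact ⟨hf.deriv_mul_neg hg, hf.deriv_deriv_mul_pos hg⟩
  have hcont : ContinuousOn (F μ) (Set.Ioi 0) := fun x hx => by
    obtain ⟨hf, hg⟩ := hfactors x hx
    rw [F_eq_mul hμ]
    exact (hf.differentiableAt.mul hg.differentiableAt).continuousAt.continuousWithinAt
  exact ⟨strictAntiOn_of_deriv_neg (convex_Ioi 0) hcont fun x hx =>
      (hderivs x (interior_Ioi.subset hx)).1,
    strictConvexOn_of_deriv2_pos (convex_Ioi 0) hcont fun x hx =>
      (hderivs x (interior_Ioi.subset hx)).2,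
    hderivs⟩
end

section
/- For all μ₁, μ₂ > 0: the map r ↦ F(μ₁, 1 − 1/r) is strictly decreasing on (1, ∞) and tends to 1 as r → ∞; the map r ↦ F(μ₂, 1/r) is strictly increasing on (1, ∞) and tends to +∞ as r → ∞; consequently the difference r ↦ F(μ₁, 1 − 1/r) − F(μ₂, 1/r) is strictly decreasing on (1, ∞) and has at most one zero in any interval [r₀, ∞) with r₀ > 1. -/
/-!
For `μ > 0` the map `x ↦ F(μ, x)` is strictly decreasing on `(0, ∞)`: its numerator
`1 + μ/x²` decreases and its denominator `1 + μx` increases. Composing with the increasing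
map `r ↦ 1 - 1/r` and the decreasing map `r ↦ 1/r` (both sending `(1, ∞)` into `(0, ∞)`)
gives the two monotonicity claims, and a decreasing minus an increasing function is strictly
decreasing, hence injective. The first limit is continuity of `F(μ, ·)` at `1`, where it equals
`1`; the second follows from `F(μ, 1/r) ≥ (1 + μr²)/(1 + μ)` for `r ≥ 1`.
-/

open Filter

open Set

theorem F_strictAntiOn {μ : ℝ} (hμ : 0 < μ) : StrictAntiOn (F μ) (Ioi 0) := by
  intro x (hx : 0 < x) y (hy : 0 < y) hxy
  unfold F
  calc (1 + μ / y ^ 2) / (1 + μ * y) < (1 + μ / x ^ 2) / (1 + μ * y) := by gcongr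
    _ ≤ (1 + μ / x ^ 2) / (1 + μ * x) := by gcongr

theorem F_one {μ : ℝ} (hμ : μ ≠ -1) : F μ 1 = 1 := by
  rw [F, one_pow, div_one, mul_one, div_self]
  exact fun h => hμ (by linarith)

theorem continuousAt_F {μ x : ℝ} (hx : x ≠ 0) (hμx : 1 + μ * x ≠ 0) : ContinuousAt (F μ) x := by
  unfold F
  fun_prop (disch := simp [*])

theorem mapsTo_one_sub_one_div : MapsTo (fun r : ℝ => 1 - 1 / r) (Ioi 1) (Ioi 0) := by
  intro r (hr : 1 < r)
  simpa [sub_pos] using inv_lt_one_of_one_lt₀ hr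

theorem mapsTo_one_div : MapsTo (fun r : ℝ => 1 / r) (Ioi 1) (Ioi 0) := by
  intro r (hr : 1 < r)
  simp only [mem_Ioi]; positivity

theorem strictMonoOn_one_sub_one_div : StrictMonoOn (fun r : ℝ => 1 - 1 / r) (Ioi 0) := by
  intro x (hx : 0 < x) y (hy : 0 < y) hxy
  simp only [sub_lt_sub_iff_left]
  exact one_div_lt_one_div_of_lt hx hxy

theorem strictAntiOn_one_div : StrictAntiOn (fun r : ℝ => 1 / r) (Ioi 0) :=
  fun _ hx _ _ hxy => one_div_lt_one_div_of_lt hx hxy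

theorem tendsto_F_one_sub_one_div_atTop {μ : ℝ} (hμ : μ ≠ -1) :
    Tendsto (fun r : ℝ => F μ (1 - 1 / r)) atTop (nhds 1) := by
  have harg : Tendsto (fun r : ℝ => 1 - 1 / r) atTop (nhds 1) := by
    simpa only [one_div, sub_zero] using tendsto_inv_atTop_zero.const_sub (1 : ℝ)
  have hcont := continuousAt_F (μ := μ) one_ne_zero fun h => hμ (by linarith)
  simpa only [F_one hμ, Function.comp_def] using hcont.tendsto.comp harg

theorem le_F_one_div {μ r : ℝ} (hμ : 0 < μ) (hr : 1 ≤ r) :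
    (1 + μ * r ^ 2) / (1 + μ) ≤ F μ (1 / r) := by
  have hF : F μ (1 / r) = (1 + μ * r ^ 2) / (1 + μ / r) := by
    rw [F, one_div, inv_pow, div_inv_eq_mul, div_eq_mul_inv μ r]
  rw [hF]
  gcongr
  exact div_le_self hμ.le hr

theorem tendsto_F_one_div_atTop {μ : ℝ} (hμ : 0 < μ) :
    Tendsto (fun r : ℝ => F μ (1 / r)) atTop atTop := by
  have hquad : Tendsto (fun r : ℝ => (1 + μ * r ^ 2) / (1 + μ)) atTop atTop :=
    (tendsto_atTop_add_const_left _ 1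
      ((tendsto_pow_atTop two_ne_zero).const_mul_atTop hμ)).atTop_div_const (by positivity)
  exact tendsto_atTop_mono' atTop
    ((eventually_ge_atTop 1).mono fun r hr => le_F_one_div hμ hr) hquad

/-- For `μ₁, μ₂ > 0`: `r ↦ F(μ₁, 1 − 1/r)` is strictly decreasing on `(1, ∞)`
and tends to `1` at `∞`; `r ↦ F(μ₂, 1/r)` is strictly increasing on `(1, ∞)`
and tends to `+∞`; hence their difference is strictly decreasing on `(1, ∞)`
and has at most one zero on each `[r₀, ∞)` with `r₀ > 1`. -/
theorem F_existence_inequality_monotone (μ₁ μ₂ : ℝ) (hμ₁ : 0 < μ₁) (hμ₂ : 0 < μ₂) :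
    StrictAntiOn (fun r : ℝ => F μ₁ (1 - 1 / r)) (Set.Ioi 1) ∧
      Tendsto (fun r : ℝ => F μ₁ (1 - 1 / r)) atTop (nhds 1) ∧
      StrictMonoOn (fun r : ℝ => F μ₂ (1 / r)) (Set.Ioi 1) ∧
      Tendsto (fun r : ℝ => F μ₂ (1 / r)) atTop atTop ∧
      StrictAntiOn (fun r : ℝ => F μ₁ (1 - 1 / r) - F μ₂ (1 / r)) (Set.Ioi 1) ∧
      ∀ r₀ : ℝ, 1 < r₀ →
        ∀ x ∈ Set.Ici r₀, ∀ y ∈ Set.Ici r₀,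
          F μ₁ (1 - 1 / x) - F μ₂ (1 / x) = 0 →
          F μ₁ (1 - 1 / y) - F μ₂ (1 / y) = 0 → x = y := by
  have hIoi : Ioi (1 : ℝ) ⊆ Ioi 0 := Ioi_subset_Ioi zero_le_one
  have hanti : StrictAntiOn (fun r : ℝ => F μ₁ (1 - 1 / r)) (Ioi 1) :=
    (F_strictAntiOn hμ₁).comp_strictMonoOn (strictMonoOn_one_sub_one_div.mono hIoi)
      mapsTo_one_sub_one_div
  have hmono : StrictMonoOn (fun r : ℝ => F μ₂ (1 / r)) (Ioi 1) :=
    (F_strictAntiOn hμ₂).comp (strictAntiOn_one_div.mono hIoi) mapsTo_one_div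
  have hdiff : StrictAntiOn (fun r : ℝ => F μ₁ (1 - 1 / r) - F μ₂ (1 / r)) (Ioi 1) :=
    fun x hx y hy hxy => sub_lt_sub (hanti hx hy hxy) (hmono hx hy hxy)
  refine ⟨hanti, tendsto_F_one_sub_one_div_atTop (by linarith), hmono, tendsto_F_one_div_atTop hμ₂,
    hdiff, fun r₀ hr₀ x hx y hy hfx hfy => ?_⟩
  have hsub : Ici r₀ ⊆ Ioi 1 := Ici_subset_Ioi.mpr hr₀
  exact hdiff.injOn (hsub hx) (hsub hy) (hfx.trans hfy.symm)
end

section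
/- For all r_j, r_k > 0 with r_j + r_k < 1 and all m_j, m_k > 0: m_j/(1 − r_k)² + m_k/(1 + r_j)² > (m_j (1 − r_k) + m_k (1 + r_j))/(1 + r_j)³. Equivalently, substituting the stabilization condition H²/I_H² = 1/(1 + r_j)³ into the Euler Resting existence condition (m_j(1 − r_k) + m_k(1 + r_j)) H²/I_H² ≤ m_j/(1 − r_k)² + m_k/(1 + r_j)² reduces it to 0 < r_j + r_k, which always holds; hence the Euler Resting configuration still exists at the angular momentum where it becomes stable. -/
/-- The Euler Resting configuration still exists at the angular momentum where
it becomes stable: for radii `0 < r_j, r_k` with `r_j + r_k < 1` and masses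
`m_j, m_k > 0`,
`m_j/(1−r_k)² + m_k/(1+r_j)² > (m_j(1−r_k) + m_k(1+r_j))/(1+r_j)³`
(the existence condition evaluated at `H²/I_H² = 1/(1+r_j)³`, which reduces to
`0 < r_j + r_k`). -/
theorem euler_resting_exists_at_stabilization
    (rj rk mj mk : ℝ) (hrj : 0 < rj) (hrk : 0 < rk) (hrjk : rj + rk < 1)
    (hmj : 0 < mj) (hmk : 0 < mk) :
    (mj * (1 - rk) + mk * (1 + rj)) / (1 + rj) ^ 3 <
      mj / (1 - rk) ^ 2 + mk / (1 + rj) ^ 2 := by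
  have h1 : (0:ℝ) < 1 - rk := by linarith
  have h2 : (0:ℝ) < 1 + rj := by linarith
  rw [div_add_div _ _ (by positivity) (by positivity), div_lt_div_iff₀ (by positivity) (by positivity)]
  have h3 : (1 - rk) ^ 3 < (1 + rj) ^ 3 :=
    pow_lt_pow_left₀ (by linarith) (le_of_lt h1) (by norm_num)
  nlinarith [mul_lt_mul_of_pos_left h3 (mul_pos hmj (pow_pos h2 2))]
end
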